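/- For every dimension d ≥ 1, every function f : {−1,1}^d → ℝ, and every ε > 0, there exists a fully connected neural network with one hidden layer in which ALL weights (including the output-layer weights) are binary, together with a rational scaling factor α ∈ ℚ applied after the output, such that the scaled output function x ↦ α · ∑_{j=1}^n s_j · σ_{θ_j}(∑_{i=1}^d W_{i,j} x_i), with W ∈ {−1,1}^{d×n}, s ∈ {−1,1}^n, θ ∈ ℝ^n, satisfies sup_{x ∈ {−1,1}^d} | α · ∑_{j=1}^n s_j · σ_{θ_j}(∑_{i=1}^d W_{i,j} x_i) − f(x) | < ε. -/

import Mathlib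

/-- The binarized activation function with threshold `θ`:
`σ θ t = 1` if `t > θ`, and `-1` otherwise. -/
noncomputable def binAct (θ t : ℝ) : ℝ := if t > θ then 1 else -1

/-!
On the cube `{−1,1}^d` the functions computed by fully binarized networks form an additive group:
networks are added by running them side by side and negated by flipping the output weights.
The neuron with weights `b ∈ {−1,1}^d` and threshold `d − 1` fires exactly at `x = b`, because
`⟪b, x⟫ = d − 2 · hammingDist b x`, and a neuron with threshold `−d − 1` is constantly `1`; their
sum is `2 · 𝟙_{x = b}`. Hence `2k` is computable for every integer-valued `k`, and the scaling
`α = 1 / (2M)` applied to `k = ⌊M f⌋` approximates `f` to within `1 / M`.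
-/

open Finset

noncomputable def binaryCube (d : ℕ) : Finset (Fin d → ℝ) := Fintype.piFinset fun _ => {1, -1}

theorem mem_binaryCube {d : ℕ} {x : Fin d → ℝ} : x ∈ binaryCube d ↔ ∀ i, x i = 1 ∨ x i = -1 := by
  simp [binaryCube]

theorem sum_mul_eq_sub_two_mul_hammingDist {d : ℕ} {x y : Fin d → ℝ}
    (hx : x ∈ binaryCube d) (hy : y ∈ binaryCube d) :
    ∑ i, y i * x i = d - 2 * hammingDist y x := by
  have hterm : ∀ i, y i * x i = 1 - 2 * if y i ≠ x i then 1 else 0 := by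
    intro i
    rcases mem_binaryCube.1 hx i with h | h <;> rcases mem_binaryCube.1 hy i with h' | h' <;>
      norm_num [h, h']
  simp only [hterm, sum_sub_distrib, ← mul_sum, sum_boole]
  simp [hammingDist]

theorem binAct_sub_one_sum_mul_eq_ite {d : ℕ} {x b : Fin d → ℝ}
    (hx : x ∈ binaryCube d) (hb : b ∈ binaryCube d) :
    binAct (d - 1) (∑ i, b i * x i) = if x = b then 1 else -1 := by
  rw [sum_mul_eq_sub_two_mul_hammingDist hx hb, binAct]
  by_cases hxb : x = b
  · simp [hxb]
  · have : (1 : ℝ) ≤ hammingDist b x := by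
      exact_mod_cast Nat.one_le_iff_ne_zero.2 (hammingDist_ne_zero.2 (Ne.symm hxb))
    rw [if_neg (by linarith), if_neg hxb]

theorem binAct_neg_sub_one_sum_eq_one {d : ℕ} {x : Fin d → ℝ} (hx : x ∈ binaryCube d) :
    binAct (-d - 1) (∑ i, 1 * x i) = 1 := by
  have hone : (fun _ => 1 : Fin d → ℝ) ∈ binaryCube d := mem_binaryCube.2 fun _ => .inl rfl
  rw [sum_mul_eq_sub_two_mul_hammingDist hx hone, binAct, if_pos]
  have : (hammingDist (fun _ => 1 : Fin d → ℝ) x : ℝ) ≤ d := by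
    exact_mod_cast (hammingDist_le_card_fintype.trans_eq (Fintype.card_fin d))
  linarith

noncomputable def bnnOutput {d n : ℕ} (W : Fin d → Fin n → ℝ) (s θ : Fin n → ℝ) (x : Fin d → ℝ) :
    ℝ :=
  ∑ j, s j * binAct (θ j) (∑ i, W i j * x i)

theorem bnnOutput_append {d m n : ℕ} (W : Fin d → Fin m → ℝ) (W' : Fin d → Fin n → ℝ)
    (s θ : Fin m → ℝ) (s' θ' : Fin n → ℝ) (x : Fin d → ℝ) :
    bnnOutput (fun i => Fin.append (W i) (W' i)) (Fin.append s s') (Fin.append θ θ') x =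
      bnnOutput W s θ x + bnnOutput W' s' θ' x := by
  simp [bnnOutput, Fin.sum_univ_add]

theorem bnnOutput_neg {d n : ℕ} (W : Fin d → Fin n → ℝ) (s θ : Fin n → ℝ) (x : Fin d → ℝ) :
    bnnOutput W (-s) θ x = -bnnOutput W s θ x := by
  simp [bnnOutput]

theorem fin_append_eq_one_or_eq_neg_one {m n : ℕ} {u : Fin m → ℝ} {v : Fin n → ℝ}
    (hu : ∀ j, u j = 1 ∨ u j = -1) (hv : ∀ j, v j = 1 ∨ v j = -1) :
    ∀ j, Fin.append u v j = 1 ∨ Fin.append u v j = -1 :=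
  Fin.addCases (by simpa using hu) (by simpa using hv)

noncomputable def binaryNetFunctions (d : ℕ) : AddSubgroup ((Fin d → ℝ) → ℝ) where
  carrier := {g | ∃ (n : ℕ) (W : Fin d → Fin n → ℝ) (s θ : Fin n → ℝ),
    (∀ i j, W i j = 1 ∨ W i j = -1) ∧ (∀ j, s j = 1 ∨ s j = -1) ∧
      ∀ x ∈ binaryCube d, bnnOutput W s θ x = g x}
  zero_mem' := ⟨0, fun _ => Fin.elim0, Fin.elim0, Fin.elim0, fun _ j => j.elim0, fun j => j.elim0,
    fun _ _ => by simp [bnnOutput]⟩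
  add_mem' := by
    rintro g g' ⟨m, W, s, θ, hW, hs, hg⟩ ⟨n, W', s', θ', hW', hs', hg'⟩
    exact ⟨m + n, fun i => Fin.append (W i) (W' i), Fin.append s s', Fin.append θ θ',
      fun i => fin_append_eq_one_or_eq_neg_one (hW i) (hW' i),
      fin_append_eq_one_or_eq_neg_one hs hs',
      fun x hx => by rw [bnnOutput_append, hg x hx, hg' x hx, Pi.add_apply]⟩
  neg_mem' := by
    rintro g ⟨n, W, s, θ, hW, hs, hg⟩
    refine ⟨n, W, -s, θ, hW, fun j => ?_, fun x hx => by rw [bnnOutput_neg, hg x hx, Pi.neg_apply]⟩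
    rcases hs j with h | h <;> simp [h]

theorem mem_binaryNetFunctions_of_eqOn {d : ℕ} {g h : (Fin d → ℝ) → ℝ}
    (hg : g ∈ binaryNetFunctions d) (hgh : ∀ x ∈ binaryCube d, g x = h x) :
    h ∈ binaryNetFunctions d := by
  obtain ⟨n, W, s, θ, hW, hs, hout⟩ := hg
  exact ⟨n, W, s, θ, hW, hs, fun x hx => (hout x hx).trans (hgh x hx)⟩

theorem neuron_mem_binaryNetFunctions {d : ℕ} {w : Fin d → ℝ} (hw : ∀ i, w i = 1 ∨ w i = -1)
    (θ : ℝ) : (fun x => binAct θ (∑ i, w i * x i)) ∈ binaryNetFunctions d :=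
  ⟨1, fun i _ => w i, fun _ => 1, fun _ => θ, fun i _ => hw i, fun _ => .inl rfl,
    fun x _ => by simp [bnnOutput]⟩

theorem two_mul_indicator_mem_binaryNetFunctions {d : ℕ} {b : Fin d → ℝ} (hb : b ∈ binaryCube d) :
    (fun x => if x = b then 2 else 0) ∈ binaryNetFunctions d := by
  have hsum := add_mem (neuron_mem_binaryNetFunctions (fun _ => .inl rfl) (-d - 1))
    (neuron_mem_binaryNetFunctions (mem_binaryCube.1 hb) (d - 1))
  refine mem_binaryNetFunctions_of_eqOn hsum fun x hx => ?_
  rw [Pi.add_apply, binAct_neg_sub_one_sum_eq_one hx, binAct_sub_one_sum_mul_eq_ite hx hb]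
  split_ifs <;> norm_num

theorem two_mul_intCast_mem_binaryNetFunctions {d : ℕ} (k : (Fin d → ℝ) → ℤ) :
    (fun x => 2 * (k x : ℝ)) ∈ binaryNetFunctions d := by
  have hsum := sum_mem fun b hb =>
    zsmul_mem (two_mul_indicator_mem_binaryNetFunctions (d := d) hb) (k b)
  refine mem_binaryNetFunctions_of_eqOn hsum fun x hx => ?_
  simp [Finset.sum_apply, hx, mul_comm]

theorem abs_floor_mul_div_sub_lt (t : ℝ) {M : ℝ} (hM : 0 < M) : |⌊t * M⌋ / M - t| < 1 / M := by
  have : (⌊t * M⌋ : ℝ) / M - t = -(Int.fract (t * M) / M) := by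
    rw [Int.fract]; field_simp; ring
  rw [this, abs_neg, abs_of_nonneg (div_nonneg (Int.fract_nonneg _) hM.le)]
  exact div_lt_div_of_pos_right (Int.fract_lt_one _) hM

theorem fully_binarized_bnn_universal_approx_binary_inputs_general
    (d : ℕ) (f : (Fin d → ℝ) → ℝ) (ε : ℝ) (hε : 0 < ε) :
    ∃ (n : ℕ) (W : Fin d → Fin n → ℝ) (s : Fin n → ℝ) (θ : Fin n → ℝ) (α : ℚ),
      (∀ i j, W i j = 1 ∨ W i j = -1) ∧
      (∀ j, s j = 1 ∨ s j = -1) ∧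
      ∀ x : Fin d → ℝ, (∀ i, x i = 1 ∨ x i = -1) →
        |(α : ℝ) * (∑ j, s j * binAct (θ j) (∑ i, W i j * x i)) - f x| < ε := by
  obtain ⟨m, hm⟩ := exists_nat_one_div_lt hε
  set M : ℕ := m + 1
  have hM : (0 : ℝ) < M := by positivity
  obtain ⟨n, W, s, θ, hW, hs, hout⟩ :=
    two_mul_intCast_mem_binaryNetFunctions fun x => ⌊f x * M⌋
  refine ⟨n, W, s, θ, 1 / (2 * M), hW, hs, fun x hx => ?_⟩
  have hx := hout x (mem_binaryCube.2 hx)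
  simp only [bnnOutput] at hx
  calc |((1 / (2 * M) : ℚ) : ℝ) * (∑ j, s j * binAct (θ j) (∑ i, W i j * x i)) - f x|
      = |⌊f x * M⌋ / M - f x| := by rw [hx]; push_cast; field_simp
    _ < 1 / M := abs_floor_mul_div_sub_lt (f x) hM
    _ < ε := by simpa [M] using hm

/-- **Universal approximation on binary inputs by fully binarized single-hidden-layer
networks with rational output scaling.** For every `d ≥ 1`, every `f : {−1,1}^d → ℝ`,
and every `ε > 0`, there is a single-hidden-layer network with binary hidden weights
`W ∈ {−1,1}^{d×n}`, binary output weights `s ∈ {−1,1}^n`, thresholds `θ ∈ ℝ^n` and a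
rational scaling factor `α ∈ ℚ` such that
`|α * ∑ j, s j * σ_{θ j} (∑ i, W i j * x i) − f x| < ε` for all `x ∈ {−1,1}^d`. -/
theorem fully_binarized_bnn_universal_approx_binary_inputs
    (d : ℕ) (hd : 1 ≤ d) (f : (Fin d → ℝ) → ℝ) (ε : ℝ) (hε : 0 < ε) :
    ∃ (n : ℕ) (W : Fin d → Fin n → ℝ) (s : Fin n → ℝ) (θ : Fin n → ℝ) (α : ℚ),
      (∀ i j, W i j = 1 ∨ W i j = -1) ∧
      (∀ j, s j = 1 ∨ s j = -1) ∧
      ∀ x : Fin d → ℝ, (∀ i, x i = 1 ∨ x i = -1) →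
        |(α : ℝ) * (∑ j, s j * binAct (θ j) (∑ i, W i j * x i)) - f x| < ε :=
  fully_binarized_bnn_universal_approx_binary_inputs_general d f ε hε
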